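/- arXiv:1811.01455 — 2 statements merged into one kernel-verified Lean document; each statement's English description precedes it below -/
import Mathlib

section
/- For every real x, the matrices M(x + 1/2) and N(x + 1/2) are invertible with inverses [M(x + 1/2)]^{−1} = 𝓓·P[−x]·𝓕 and [N(x + 1/2)]^{−1} = 𝓕·𝓓·P[−x]. In particular, M(0)^{−1} = 𝓓·P[1/2]·𝓕, N(0)^{−1} = 𝓕·𝓓·P[1/2], [M(1/2)]^{−1} = 𝓓·𝓕, and [N(1/2)]^{−1} = 𝓕·𝓓. -/
noncomputable section

/-- `Eu x k` is the Euler polynomial `E_k(x)`, characterized by the generating function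
`(2/(e^z+1)) e^{xz} = Σ_k E_k(x) z^k / k!` for `|z| < π`. -/
def IsEulerFamily (Eu : ℝ → ℕ → ℝ) : Prop :=
  ∀ x z : ℝ, |z| < Real.pi →
    HasSum (fun k : ℕ => Eu x k * z ^ k / (Nat.factorial k : ℝ))
      (2 / (Real.exp z + 1) * Real.exp (x * z))

/-- The `(n+1)×(n+1)` Euler polynomial matrix `𝓔(x)`, with `(i,j)` entry
`C(i,j) E_{i-j}(x)` (which is `0` for `j > i` since then `C(i,j) = 0`). -/
def eulerMatrix (Eu : ℝ → ℕ → ℝ) (n : ℕ) (x : ℝ) :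
    Matrix (Fin (n + 1)) (Fin (n + 1)) ℝ :=
  Matrix.of fun i j => (Nat.choose (i : ℕ) (j : ℕ) : ℝ) * Eu x ((i : ℕ) - (j : ℕ))

/-- The generalized Pascal matrix of the first kind `P[x]`. -/
def pascalMatrix (n : ℕ) (x : ℝ) : Matrix (Fin (n + 1)) (Fin (n + 1)) ℝ :=
  Matrix.of fun i j => (Nat.choose (i : ℕ) (j : ℕ) : ℝ) * x ^ ((i : ℕ) - (j : ℕ))

/-- The matrix `𝓓`, with `(i,j)` entry `(1+(-1)^(i-j)) C(i,j) 2^(j-i-1)`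
(which is `0` for `j > i` since then `C(i,j) = 0`). -/
def Dmatrix (n : ℕ) : Matrix (Fin (n + 1)) (Fin (n + 1)) ℝ :=
  Matrix.of fun i j =>
    (1 + (-1 : ℝ) ^ ((i : ℤ) - (j : ℤ))) * (Nat.choose (i : ℕ) (j : ℕ) : ℝ) *
      (2 : ℝ) ^ ((j : ℤ) - (i : ℤ) - 1)

/-- The `(n+1)×(n+1)` Fibonacci matrix `𝓕`, with `(i,j)` entry `F_{i-j+1}` for `i ≥ j`
and `0` otherwise. -/
def fibMatrix (n : ℕ) : Matrix (Fin (n + 1)) (Fin (n + 1)) ℝ :=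
  Matrix.of fun i j =>
    if (j : ℕ) ≤ (i : ℕ) then (Nat.fib ((i : ℕ) - (j : ℕ) + 1) : ℝ) else 0

/-- The matrix `M(x)`, with `(i,j)` entry
`C(i,j) E_{i-j}(x) - C(i-1,j) E_{i-j-1}(x) - C(i-2,j) E_{i-j-2}(x)`,
where a term is `0` whenever its binomial coefficient vanishes. -/
def Mmatrix (Eu : ℝ → ℕ → ℝ) (n : ℕ) (x : ℝ) :
    Matrix (Fin (n + 1)) (Fin (n + 1)) ℝ :=
  Matrix.of fun i j =>
    (Nat.choose (i : ℕ) (j : ℕ) : ℝ) * Eu x ((i : ℕ) - (j : ℕ))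
    - (if 1 ≤ (i : ℕ) then
        (Nat.choose ((i : ℕ) - 1) (j : ℕ) : ℝ) * Eu x ((i : ℕ) - 1 - (j : ℕ)) else 0)
    - (if 2 ≤ (i : ℕ) then
        (Nat.choose ((i : ℕ) - 2) (j : ℕ) : ℝ) * Eu x ((i : ℕ) - 2 - (j : ℕ)) else 0)

/-- The matrix `N(x)`, with `(i,j)` entry
`C(i,j) E_{i-j}(x) - C(i,j+1) E_{i-j-1}(x) - C(i,j+2) E_{i-j-2}(x)`,
where a term is `0` whenever its binomial coefficient vanishes. -/
def Nmatrix (Eu : ℝ → ℕ → ℝ) (n : ℕ) (x : ℝ) :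
    Matrix (Fin (n + 1)) (Fin (n + 1)) ℝ :=
  Matrix.of fun i j =>
    (Nat.choose (i : ℕ) (j : ℕ) : ℝ) * Eu x ((i : ℕ) - (j : ℕ))
    - (Nat.choose (i : ℕ) ((j : ℕ) + 1) : ℝ) * Eu x ((i : ℕ) - ((j : ℕ) + 1))
    - (Nat.choose (i : ℕ) ((j : ℕ) + 2) : ℝ) * Eu x ((i : ℕ) - ((j : ℕ) + 2))

/-!
Lower-triangular matrices `(C(i,j) a_{i-j})` multiply like the exponential generating functions
`Σ a_m z^m / m!`, and lower-triangular Toeplitz matrices like the ordinary ones. `𝓓 P[-x]`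
belongs to `(e^{(1/2-x)z} + e^{(-1/2-x)z}) / 2`, the reciprocal of the generating function
`2 e^{(x+1/2)z} / (e^z+1)` of the Euler matrix `𝓔(x+1/2)`; as both series converge near `0`,
this analytic identity is one of formal power series. The Fibonacci matrix belongs to
`1 / (1 - z - z²)`, and `M(x) = L 𝓔(x)`, `N(x) = 𝓔(x) L` for the Toeplitz matrix `L` of
`1 - z - z²`.
-/

open Finset PowerSeries

namespace PowerSeries

section Toeplitz

variable {R : Type*} [Semiring R] (n : ℕ)

def lowerToeplitz : R⟦X⟧ →+* Matrix (Fin n) (Fin n) R where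
  toFun f := Matrix.of fun i j => if (j : ℕ) ≤ i then coeff ((i : ℕ) - j) f else 0
  map_one' := by
    ext i j
    simp only [Matrix.of_apply, coeff_one, Matrix.one_apply, Fin.ext_iff]
    split_ifs <;> first | rfl | omega
  map_mul' f g := by
    ext i j
    simp only [Matrix.mul_apply, Matrix.of_apply, ite_mul, zero_mul, mul_ite, mul_zero]
    rw [Fin.sum_univ_eq_sum_range (fun k => if j ≤ k then if k ≤ (i : ℕ) then
        coeff ((i : ℕ) - k) f * coeff (k - j) g else 0 else 0)]
    split_ifs with hji
    · have hsupp : Ico (j : ℕ) (i + 1) ⊆ range n := fun k hk => by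
        simp only [mem_Ico, mem_range] at hk ⊢; omega
      rw [coeff_mul, ← Nat.sum_antidiagonal_swap]
      simp only [Prod.fst_swap, Prod.snd_swap]
      rw [Nat.sum_antidiagonal_eq_sum_range_succ (fun a b => coeff b f * coeff a g),
        ← sum_subset hsupp fun k _ hk => ?_, sum_Ico_eq_sum_range]
      · refine sum_congr (by congr 1; omega) fun t ht => ?_
        simp only [mem_range] at ht
        rw [if_pos (by omega), if_pos (by omega), Nat.sub_sub, Nat.add_sub_cancel_left]
      · simp only [mem_Ico, not_and_or, not_le, not_lt] at hk
        split_ifs <;> first | rfl | omega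
    · refine (sum_eq_zero fun k _ => ?_).symm
      split_ifs <;> first | rfl | omega
  map_zero' := by ext; simp
  map_add' f g := by
    ext
    simp only [Matrix.of_apply, map_add, Matrix.add_apply]
    split_ifs <;> simp

variable {n}

theorem lowerToeplitz_apply (f : R⟦X⟧) (i j : Fin n) :
    lowerToeplitz n f i j = if (j : ℕ) ≤ i then coeff ((i : ℕ) - j) f else 0 := rfl

theorem lowerToeplitz_X_apply (i j : Fin n) :
    lowerToeplitz n (X : R⟦X⟧) i j = if (j : ℕ) + 1 = i then 1 else 0 := by
  simp only [lowerToeplitz_apply, coeff_X]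
  split_ifs <;> first | rfl | omega

theorem lowerToeplitz_X_mul_apply (A : Matrix (Fin n) (Fin n) R) (i j : Fin n) :
    (lowerToeplitz n (X : R⟦X⟧) * A) i j =
      if h : 1 ≤ (i : ℕ) then A ⟨i - 1, by omega⟩ j else 0 := by
  simp only [Matrix.mul_apply, lowerToeplitz_X_apply, ite_mul, one_mul, zero_mul]
  split_ifs with h
  · rw [sum_eq_single ⟨i - 1, by omega⟩
      (fun k _ hk => if_neg fun h' => hk (by ext; simp only; omega)) (by simp),
      if_pos (by simp only; omega)]
  · exact sum_eq_zero fun k _ => if_neg (by omega)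

theorem mul_lowerToeplitz_X_apply (A : Matrix (Fin n) (Fin n) R) (i j : Fin n) :
    (A * lowerToeplitz n (X : R⟦X⟧)) i j =
      if h : (j : ℕ) + 1 < n then A i ⟨j + 1, h⟩ else 0 := by
  simp only [Matrix.mul_apply, lowerToeplitz_X_apply, mul_ite, mul_one, mul_zero]
  split_ifs with h
  · rw [sum_eq_single ⟨j + 1, h⟩
      (fun k _ hk => if_neg fun h' => hk (by ext; simp only; omega)) (by simp), if_pos rfl]
  · exact sum_eq_zero fun k _ => if_neg (by omega)

end Toeplitz

def fibSeries {R : Type*} [Ring R] : R⟦X⟧ := mk fun m => (Nat.fib (m + 1) : R)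

theorem one_sub_X_sub_X_sq_mul_fibSeries {R : Type*} [Ring R] :
    (1 - X - X ^ 2) * fibSeries = (1 : R⟦X⟧) := by
  ext m
  rcases m with _ | _ | m <;>
    simp [fibSeries, sub_mul, coeff_X_pow_mul', coeff_one, Nat.fib_add_two]

end PowerSeries

theorem hasFPowerSeriesAt_ofScalars_of_hasSum {r : ℝ} (hr : 0 < r) {c : ℕ → ℝ} {F : ℝ → ℝ}
    (hc : ∀ z, |z| < r → HasSum (fun m => c m * z ^ m) (F z)) :
    HasFPowerSeriesAt F (FormalMultilinearSeries.ofScalars ℝ c) 0 := by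
  have hr2 : |r / 2| < r := by rw [abs_of_pos (half_pos hr)]; linarith
  refine ⟨ENNReal.ofReal (r / 2), ?_, by simpa using hr, fun {z} hz => ?_⟩
  · rw [← ENNReal.ofNNReal_toNNReal]
    refine FormalMultilinearSeries.le_radius_of_summable_norm _ ?_
    refine (summable_abs_iff.mpr (hc _ hr2).summable).congr fun m => ?_
    simp [abs_mul, abs_of_pos (half_pos hr), max_eq_left (half_pos hr).le]
  · rw [Metric.mem_eball, edist_zero_right, enorm_eq_nnnorm, ← ENNReal.ofReal_coe_nnreal,
      ENNReal.ofReal_lt_ofReal_iff (half_pos hr), coe_nnnorm, Real.norm_eq_abs] at hz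
    simpa [FormalMultilinearSeries.ofScalars_apply_eq, mul_comm] using hc z (by linarith)

namespace PowerSeries

theorem eq_of_hasSum {r : ℝ} (hr : 0 < r) {f g : ℝ⟦X⟧} {F : ℝ → ℝ}
    (hf : ∀ z, |z| < r → HasSum (fun m => coeff m f * z ^ m) (F z))
    (hg : ∀ z, |z| < r → HasSum (fun m => coeff m g * z ^ m) (F z)) : f = g := by
  ext m
  have := (hasFPowerSeriesAt_ofScalars_of_hasSum hr hf).eq_formalMultilinearSeries
    (hasFPowerSeriesAt_ofScalars_of_hasSum hr hg)
  exact congrFun (FormalMultilinearSeries.ofScalars_series_injective (𝕜 := ℝ) ℝ this) m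

theorem hasSum_coeff_mul {f g : ℝ⟦X⟧} {z a b : ℝ} (hf : HasSum (fun m => coeff m f * z ^ m) a)
    (hg : HasSum (fun m => coeff m g * z ^ m) b) :
    HasSum (fun m => coeff m (f * g) * z ^ m) (a * b) := by
  have hcauchy := hasSum_sum_range_mul_of_summable_norm hf.summable.norm hg.summable.norm
  rw [hf.tsum_eq, hg.tsum_eq] at hcauchy
  have hcoeff : (fun m => coeff m (f * g) * z ^ m) =
      fun m => ∑ k ∈ range (m + 1), coeff k f * z ^ k * (coeff (m - k) g * z ^ (m - k)) := by
    funext m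
    rw [coeff_mul, Nat.sum_antidiagonal_eq_sum_range_succ (fun a b => coeff a f * coeff b g),
      sum_mul]
    refine sum_congr rfl fun k hk => ?_
    rw [← pow_mul_pow_sub z (mem_range_succ_iff.mp hk)]
    ring
  rw [hcoeff]
  exact hcauchy

theorem mul_eq_of_hasSum {r : ℝ} (hr : 0 < r) {f g h : ℝ⟦X⟧} {F G : ℝ → ℝ}
    (hf : ∀ z, |z| < r → HasSum (fun m => coeff m f * z ^ m) (F z))
    (hg : ∀ z, |z| < r → HasSum (fun m => coeff m g * z ^ m) (G z))
    (hh : ∀ z, |z| < r → HasSum (fun m => coeff m h * z ^ m) (F z * G z)) : f * g = h :=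
  eq_of_hasSum hr (fun z hz => hasSum_coeff_mul (hf z hz) (hg z hz)) hh

end PowerSeries

open Nat

section Appell

variable {K : Type*} [Field K]

def egf (a : ℕ → K) : K⟦X⟧ := mk fun m => a m / m !

@[simp]
theorem coeff_egf (a : ℕ → K) (m : ℕ) : coeff m (egf a) = a m / m ! := coeff_mk _ _

/-- The exponential Riordan array `[egf a, z]`. -/
def appellMatrix (n : ℕ) (a : ℕ → K) : Matrix (Fin n) (Fin n) K :=
  Matrix.of fun i j => ((i : ℕ).choose j : K) * a (i - j)

theorem appellMatrix_eq_diagonal_mul_lowerToeplitz [CharZero K] (n : ℕ) (a : ℕ → K) :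
    appellMatrix n a =
      Matrix.diagonal (fun i : Fin n => ((i : ℕ)! : K)) * lowerToeplitz n (egf a) *
        Matrix.diagonal (fun j : Fin n => ((j : ℕ)! : K)⁻¹) := by
  ext i j
  rw [Matrix.mul_diagonal, Matrix.diagonal_mul, lowerToeplitz_apply, appellMatrix,
    Matrix.of_apply, coeff_egf]
  split_ifs with hji
  · rw [Nat.cast_choose K hji]
    field_simp
  · rw [Nat.choose_eq_zero_of_lt (by omega)]
    simp

theorem appellMatrix_mul_appellMatrix [CharZero K] {n : ℕ} {a b c : ℕ → K}
    (h : egf a * egf b = egf c) : appellMatrix n a * appellMatrix n b = appellMatrix n c := by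
  have hcancel : Matrix.diagonal (fun j : Fin n => ((j : ℕ)! : K)⁻¹) *
      Matrix.diagonal (fun i : Fin n => ((i : ℕ)! : K)) = 1 := by
    rw [Matrix.diagonal_mul_diagonal, ← Matrix.diagonal_one]
    congr 1
    funext i
    exact inv_mul_cancel₀ (Nat.cast_ne_zero.mpr (factorial_ne_zero _))
  simp only [appellMatrix_eq_diagonal_mul_lowerToeplitz, ← h, map_mul, Matrix.mul_assoc]
  rw [← Matrix.mul_assoc (Matrix.diagonal _) (Matrix.diagonal _), hcancel, Matrix.one_mul]

theorem appellMatrix_zero_pow (n : ℕ) : appellMatrix n (fun m => (0 : K) ^ m) = 1 := by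
  ext i j
  simp only [appellMatrix, Matrix.of_apply, Matrix.one_apply, Fin.ext_iff]
  split_ifs with h
  · simp [h]
  · rcases lt_or_gt_of_ne h with h | h
    · simp [Nat.choose_eq_zero_of_lt h]
    · simp [Nat.sub_ne_zero_of_lt h]

end Appell

theorem egf_mul_egf_of_hasSum {r : ℝ} (hr : 0 < r) {a b c : ℕ → ℝ} {A B : ℝ → ℝ}
    (ha : ∀ z, |z| < r → HasSum (fun m => a m * z ^ m / m !) (A z))
    (hb : ∀ z, |z| < r → HasSum (fun m => b m * z ^ m / m !) (B z))
    (hc : ∀ z, |z| < r → HasSum (fun m => c m * z ^ m / m !) (A z * B z)) :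
    egf a * egf b = egf c := by
  apply mul_eq_of_hasSum hr <;> simpa only [coeff_egf, div_mul_eq_mul_div]

theorem Real.hasSum_pow_mul_pow_div_factorial (u z : ℝ) :
    HasSum (fun m => u ^ m * z ^ m / m !) (Real.exp (u * z)) := by
  simpa only [← mul_pow, Real.exp_eq_exp_ℝ] using NormedSpace.expSeries_div_hasSum_exp (u * z)

def powAvg (u v : ℝ) (m : ℕ) : ℝ := (u ^ m + v ^ m) / 2

theorem hasSum_powAvg_mul_pow_div_factorial (u v z : ℝ) :
    HasSum (fun m => powAvg u v m * z ^ m / m !) ((Real.exp (u * z) + Real.exp (v * z)) / 2) := by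
  have hterm : (fun m => powAvg u v m * z ^ m / m !) =
      fun m => (u ^ m * z ^ m / m ! + v ^ m * z ^ m / m !) / 2 := by
    funext m
    rw [powAvg]
    ring
  rw [hterm]
  exact ((Real.hasSum_pow_mul_pow_div_factorial u z).add
    (Real.hasSum_pow_mul_pow_div_factorial v z)).div_const 2

theorem Dmatrix_eq_appellMatrix (n : ℕ) :
    Dmatrix n = appellMatrix (n + 1) (powAvg (1 / 2) (-1 / 2)) := by
  ext i j
  simp only [Dmatrix, appellMatrix, powAvg, Matrix.of_apply]
  rcases le_or_gt (j : ℕ) i with hji | hij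
  · obtain ⟨m, hm⟩ : ∃ m, (i : ℕ) = j + m := ⟨i - j, by omega⟩
    rw [hm, Nat.add_sub_cancel_left, Nat.cast_add, add_sub_cancel_left,
      show (j : ℤ) - (j + m) - 1 = -((m + 1 : ℕ) : ℤ) by push_cast; ring, zpow_neg, zpow_natCast,
      zpow_natCast, div_pow, div_pow, one_pow]
    field_simp
    ring
  · simp [Nat.choose_eq_zero_of_lt hij]

theorem Dmatrix_mul_pascalMatrix (n : ℕ) (x : ℝ) :
    Dmatrix n * pascalMatrix n x = appellMatrix (n + 1) (powAvg (x + 1 / 2) (x - 1 / 2)) := by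
  refine (Dmatrix_eq_appellMatrix n).symm ▸ appellMatrix_mul_appellMatrix
    (egf_mul_egf_of_hasSum one_pos (fun z _ => hasSum_powAvg_mul_pow_div_factorial _ _ z)
      (fun z _ => Real.hasSum_pow_mul_pow_div_factorial x z) fun z _ => ?_)
  convert hasSum_powAvg_mul_pow_div_factorial (x + 1 / 2) (x - 1 / 2) z using 1
  simp only [add_mul, sub_mul, Real.exp_add, Real.exp_sub, neg_div, neg_mul, Real.exp_neg]
  field_simp

theorem eulerMatrix_mul_appellMatrix_powAvg {Eu : ℝ → ℕ → ℝ} (hEu : IsEulerFamily Eu) (n : ℕ)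
    (y : ℝ) : eulerMatrix Eu n y * appellMatrix (n + 1) (powAvg (1 - y) (-y)) = 1 := by
  refine (appellMatrix_mul_appellMatrix (egf_mul_egf_of_hasSum Real.pi_pos (hEu y)
    (fun z _ => hasSum_powAvg_mul_pow_div_factorial _ _ z) fun z _ => ?_)).trans
    (appellMatrix_zero_pow _)
  convert Real.hasSum_pow_mul_pow_div_factorial 0 z using 1
  have : Real.exp z + 1 ≠ 0 := by positivity
  simp only [zero_mul, Real.exp_zero, sub_mul, Real.exp_sub, one_mul, neg_mul, Real.exp_neg]
  field_simp

theorem eulerMatrix_mul_Dmatrix_mul_pascalMatrix {Eu : ℝ → ℕ → ℝ} (hEu : IsEulerFamily Eu)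
    (n : ℕ) (x : ℝ) : eulerMatrix Eu n (x + 1 / 2) * (Dmatrix n * pascalMatrix n (-x)) = 1 := by
  rw [Dmatrix_mul_pascalMatrix, show -x + 1 / 2 = 1 - (x + 1 / 2) by ring,
    show -x - 1 / 2 = -(x + 1 / 2) by ring]
  exact eulerMatrix_mul_appellMatrix_powAvg hEu n _

theorem fibMatrix_eq_lowerToeplitz (n : ℕ) : fibMatrix n = lowerToeplitz (n + 1) fibSeries := by
  ext i j
  simp [fibMatrix, lowerToeplitz_apply, fibSeries]

theorem Mmatrix_eq_lowerToeplitz_mul_eulerMatrix (Eu : ℝ → ℕ → ℝ) (n : ℕ) (y : ℝ) :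
    Mmatrix Eu n y = lowerToeplitz (n + 1) (1 - X - X ^ 2) * eulerMatrix Eu n y := by
  rw [map_sub, map_sub, map_one, map_pow, sq, Matrix.sub_mul, Matrix.sub_mul, Matrix.one_mul,
    Matrix.mul_assoc]
  ext i j
  simp only [Matrix.sub_apply, lowerToeplitz_X_mul_apply, eulerMatrix, Mmatrix, Matrix.of_apply,
    dite_eq_ite, Nat.sub_sub (i : ℕ) 1 1, one_add_one_eq_two]
  split_ifs <;> first | rfl | omega

theorem Nmatrix_eq_eulerMatrix_mul_lowerToeplitz (Eu : ℝ → ℕ → ℝ) (n : ℕ) (y : ℝ) :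
    Nmatrix Eu n y = eulerMatrix Eu n y * lowerToeplitz (n + 1) (1 - X - X ^ 2) := by
  rw [map_sub, map_sub, map_one, map_pow, sq, Matrix.mul_sub, Matrix.mul_sub, Matrix.mul_one,
    ← Matrix.mul_assoc]
  ext i j
  simp only [Matrix.sub_apply, mul_lowerToeplitz_X_apply, eulerMatrix, Nmatrix, Matrix.of_apply,
    dite_eq_ite, add_assoc, one_add_one_eq_two]
  split_ifs
  · rfl
  · simp [Nat.choose_eq_zero_of_lt (by omega : (i : ℕ) < j + 2)]
  · simp [Nat.choose_eq_zero_of_lt (by omega : (i : ℕ) < j + 1),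
      Nat.choose_eq_zero_of_lt (by omega : (i : ℕ) < j + 2)]

theorem lowerToeplitz_mul_fibMatrix (n : ℕ) :
    lowerToeplitz (n + 1) (1 - X - X ^ 2) * fibMatrix n = 1 := by
  rw [fibMatrix_eq_lowerToeplitz, ← map_mul, one_sub_X_sub_X_sq_mul_fibSeries, map_one]

theorem pascalMatrix_zero (n : ℕ) : pascalMatrix n 0 = 1 := appellMatrix_zero_pow _

theorem Mmatrix_mul_Dmatrix_mul_pascalMatrix_mul_fibMatrix {Eu : ℝ → ℕ → ℝ}
    (hEu : IsEulerFamily Eu) (n : ℕ) (x : ℝ) :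
    Mmatrix Eu n (x + 1 / 2) * (Dmatrix n * pascalMatrix n (-x) * fibMatrix n) = 1 := by
  rw [Mmatrix_eq_lowerToeplitz_mul_eulerMatrix, Matrix.mul_assoc,
    ← Matrix.mul_assoc (eulerMatrix Eu n _), eulerMatrix_mul_Dmatrix_mul_pascalMatrix hEu,
    Matrix.one_mul, lowerToeplitz_mul_fibMatrix]

theorem Nmatrix_mul_fibMatrix_mul_Dmatrix_mul_pascalMatrix {Eu : ℝ → ℕ → ℝ}
    (hEu : IsEulerFamily Eu) (n : ℕ) (x : ℝ) :
    Nmatrix Eu n (x + 1 / 2) * (fibMatrix n * Dmatrix n * pascalMatrix n (-x)) = 1 := by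
  rw [Nmatrix_eq_eulerMatrix_mul_lowerToeplitz, Matrix.mul_assoc (fibMatrix n), Matrix.mul_assoc,
    ← Matrix.mul_assoc (lowerToeplitz _ _), lowerToeplitz_mul_fibMatrix, Matrix.one_mul,
    eulerMatrix_mul_Dmatrix_mul_pascalMatrix hEu]

theorem MN_matrix_inverse (Eu : ℝ → ℕ → ℝ) (hEu : IsEulerFamily Eu) (n : ℕ) (x : ℝ) :
    (Mmatrix Eu n (x + 1 / 2) * (Dmatrix n * pascalMatrix n (-x) * fibMatrix n) = 1 ∧
     (Dmatrix n * pascalMatrix n (-x) * fibMatrix n) * Mmatrix Eu n (x + 1 / 2) = 1) ∧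
    (Nmatrix Eu n (x + 1 / 2) * (fibMatrix n * Dmatrix n * pascalMatrix n (-x)) = 1 ∧
     (fibMatrix n * Dmatrix n * pascalMatrix n (-x)) * Nmatrix Eu n (x + 1 / 2) = 1) ∧
    (Mmatrix Eu n 0 * (Dmatrix n * pascalMatrix n (1 / 2) * fibMatrix n) = 1 ∧
     (Dmatrix n * pascalMatrix n (1 / 2) * fibMatrix n) * Mmatrix Eu n 0 = 1) ∧
    (Nmatrix Eu n 0 * (fibMatrix n * Dmatrix n * pascalMatrix n (1 / 2)) = 1 ∧
     (fibMatrix n * Dmatrix n * pascalMatrix n (1 / 2)) * Nmatrix Eu n 0 = 1) ∧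
    (Mmatrix Eu n (1 / 2) * (Dmatrix n * fibMatrix n) = 1 ∧
     (Dmatrix n * fibMatrix n) * Mmatrix Eu n (1 / 2) = 1) ∧
    (Nmatrix Eu n (1 / 2) * (fibMatrix n * Dmatrix n) = 1 ∧
     (fibMatrix n * Dmatrix n) * Nmatrix Eu n (1 / 2) = 1) := by
  have hM := Mmatrix_mul_Dmatrix_mul_pascalMatrix_mul_fibMatrix hEu n
  have hN := Nmatrix_mul_fibMatrix_mul_Dmatrix_mul_pascalMatrix hEu n
  have hM0 := hM (-(1 / 2))
  have hN0 := hN (-(1 / 2))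
  have hMh := hM 0
  have hNh := hN 0
  rw [neg_add_cancel, neg_neg] at hM0 hN0
  rw [zero_add, neg_zero, pascalMatrix_zero, Matrix.mul_one] at hMh hNh
  have both {A B : Matrix (Fin (n + 1)) (Fin (n + 1)) ℝ} (h : A * B = 1) : A * B = 1 ∧ B * A = 1 :=
    ⟨h, mul_eq_one_comm.mp h⟩
  exact ⟨both (hM x), both (hN x), both hM0, both hN0, both hMh, both hNh⟩
end
end

section
/- For every real x, the shifted Euler polynomial matrix factorizes through the Vandermonde matrix as 𝓔̃(x) = 𝓔·V(x). -/
/-! Multiplying the generating function of `E_k(a)` by `e^{bz}` gives that of `E_k(a + b)`, so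
comparing coefficients yields the addition formula `E_i(a + b) = ∑_k C(i,k) E_{i-k}(a) b^k`.
For `a = 0` and `b = j + x` its right side is the `(i, j)` entry of `𝓔 V(x)`: the terms `k > i`
that the matrix product adds vanish because `C(i,k) = 0`. -/

noncomputable section

/-- The shifted Euler polynomial matrix `𝓔̃(x)`, with `(i,j)` entry `E_i(j + x)`. -/
def shiftedEulerMatrix (Eu : ℝ → ℕ → ℝ) (n : ℕ) (x : ℝ) :
    Matrix (Fin (n + 1)) (Fin (n + 1)) ℝ :=
  Matrix.of fun i j => Eu ((j : ℕ) + x) (i : ℕ)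

/-- The `(n+1)×(n+1)` Vandermonde matrix `V(x)`, with `(i,j)` entry `(j + x)^i`. -/
def vandermondeMatrix (n : ℕ) (x : ℝ) : Matrix (Fin (n + 1)) (Fin (n + 1)) ℝ :=
  Matrix.of fun i j => ((j : ℕ) + x) ^ (i : ℕ)

open Finset Nat

theorem hasFPowerSeriesOnBall_ofScalars_of_hasSum {F : ℝ → ℝ} {c : ℕ → ℝ} {r : ℝ} (hr : 0 < r)
    (hF : ∀ z : ℝ, |z| < r → HasSum (fun n => c n * z ^ n) (F z)) :
    HasFPowerSeriesOnBall F (FormalMultilinearSeries.ofScalars ℝ c) 0 (ENNReal.ofReal r) := by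
  refine ⟨?_, ENNReal.ofReal_pos.2 hr, fun {y} hy => ?_⟩
  · refine ENNReal.le_of_forall_nnreal_lt fun s hs => ?_
    have hsr : |(s : ℝ)| < r := by
      rw [abs_of_nonneg s.coe_nonneg]
      exact (ENNReal.ofReal_lt_ofReal_iff hr).1 (by rwa [ENNReal.ofReal_coe_nnreal])
    apply FormalMultilinearSeries.le_radius_of_summable
    simpa [FormalMultilinearSeries.ofScalars_norm, abs_mul] using (hF s hsr).summable.norm
  · have hyr : |y| < r := by
      rwa [Metric.mem_eball, edist_dist, Real.dist_eq, sub_zero,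
        ENNReal.ofReal_lt_ofReal_iff hr] at hy
    simpa [FormalMultilinearSeries.ofScalars_apply_eq, mul_comm] using hF y hyr

theorem eq_of_hasSum_mul_pow {F : ℝ → ℝ} {c d : ℕ → ℝ} {r : ℝ} (hr : 0 < r)
    (hc : ∀ z : ℝ, |z| < r → HasSum (fun n => c n * z ^ n) (F z))
    (hd : ∀ z : ℝ, |z| < r → HasSum (fun n => d n * z ^ n) (F z)) : c = d :=
  FormalMultilinearSeries.ofScalars_series_injective ℝ ℝ <|
    (hasFPowerSeriesOnBall_ofScalars_of_hasSum hr hc).hasFPowerSeriesAt.eq_formalMultilinearSeries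
      (hasFPowerSeriesOnBall_ofScalars_of_hasSum hr hd).hasFPowerSeriesAt

theorem eq_of_hasSum_egf {F : ℝ → ℝ} {a b : ℕ → ℝ} {r : ℝ} (hr : 0 < r)
    (ha : ∀ z : ℝ, |z| < r → HasSum (fun n => a n * z ^ n / n !) (F z))
    (hb : ∀ z : ℝ, |z| < r → HasSum (fun n => b n * z ^ n / n !) (F z)) : a = b := by
  have hdiv : (fun n => a n / n !) = fun n => b n / n ! :=
    eq_of_hasSum_mul_pow hr
      (fun z hz => (ha z hz).congr_fun fun n => by ring)
      (fun z hz => (hb z hz).congr_fun fun n => by ring)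
  funext n
  exact (div_left_inj' (by positivity)).1 (congrFun hdiv n)

theorem HasSum.egf_mul {a b : ℕ → ℝ} {z A B : ℝ}
    (ha : HasSum (fun n => a n * z ^ n / n !) A) (hb : HasSum (fun n => b n * z ^ n / n !) B) :
    HasSum (fun n => (∑ k ∈ range (n + 1), (n.choose k : ℝ) * a k * b (n - k)) * z ^ n / n !)
      (A * B) := by
  -- summability in `ℝ` is unconditional, hence absolute, so the Cauchy product applies
  have hprod := hasSum_sum_range_mul_of_summable_norm ha.summable.norm hb.summable.norm
  rw [ha.tsum_eq, hb.tsum_eq] at hprod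
  refine hprod.congr_fun fun n => ?_
  rw [sum_mul, sum_div]
  refine sum_congr rfl fun k hk => ?_
  have hkn : k ≤ n := Nat.lt_succ_iff.1 (mem_range.1 hk)
  rw [Nat.cast_choose ℝ hkn, ← pow_mul_pow_sub z hkn]
  field_simp

theorem IsEulerFamily.add {Eu : ℝ → ℕ → ℝ} (hEu : IsEulerFamily Eu) (a b : ℝ) (i : ℕ) :
    Eu (a + b) i = ∑ k ∈ range (i + 1), (i.choose k : ℝ) * Eu a (i - k) * b ^ k := by
  have hcoeff := eq_of_hasSum_egf Real.pi_pos (hEu (a + b)) fun z hz => by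
    have hexp : HasSum (fun n => b ^ n * z ^ n / n !) (Real.exp (b * z)) := by
      simpa [Real.exp_eq_exp_ℝ, mul_pow] using NormedSpace.expSeries_div_hasSum_exp (b * z)
    convert hexp.egf_mul (hEu a z hz) using 1
    rw [add_mul, Real.exp_add]
    ring
  rw [congrFun hcoeff i]
  exact sum_congr rfl fun k _ => by ring

theorem shifted_euler_matrix_vandermonde (Eu : ℝ → ℕ → ℝ) (hEu : IsEulerFamily Eu)
    (n : ℕ) (x : ℝ) :
    shiftedEulerMatrix Eu n x = eulerMatrix Eu n 0 * vandermondeMatrix n x := by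
  ext i j
  simp only [shiftedEulerMatrix, eulerMatrix, vandermondeMatrix, Matrix.mul_apply, Matrix.of_apply]
  rw [← zero_add ((j : ℕ) + x), hEu.add, zero_add,
    Fin.sum_univ_eq_sum_range (fun k => (Nat.choose i k : ℝ) * Eu 0 (i - k) * ((j : ℕ) + x) ^ k)]
  refine sum_subset (range_subset_range.2 i.isLt) fun k _ hk => ?_
  rw [Nat.choose_eq_zero_of_lt (not_lt.1 (mt mem_range.2 hk)), Nat.cast_zero, zero_mul, zero_mul]
end
end
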